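/- arXiv:0712.0814 — 4 statements merged into one kernel-verified Lean document; each statement's English description precedes it below -/
import Mathlib

section
/- The function g ↦ g·ψ'(g), where ψ' is the trigamma function, is strictly decreasing on the positive integers; in particular for all integers g ≥ 1, (g+1)·ψ'(g+1) < g·ψ'(g). -/
/-!
Peeling off the first term of the series gives `ψ'(x) = 1/x² + ψ'(x+1)`, so
`(x+1) ψ'(x+1) < x ψ'(x)` is equivalent to `ψ'(x+1) < 1/x`. The latter follows by comparing
`1/(x+k+1)² < 1/((x+k)(x+k+1)) = 1/(x+k) - 1/(x+k+1)` termwise with a telescoping series.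
-/

/-- The trigamma function, `ψ'(x) = ∑_{k≥0} 1/(x+k)²`. -/
noncomputable def trigamma (x : ℝ) : ℝ := ∑' k : ℕ, 1 / (x + k) ^ 2

open Filter Topology

theorem summable_one_div_add_nat_sq (x : ℝ) : Summable fun k : ℕ => 1 / (x + k) ^ 2 := by
  have h := (Real.summable_one_div_nat_add_rpow x 2).mpr one_lt_two
  refine h.congr fun k => ?_
  rw [Real.rpow_two, sq_abs, add_comm]

theorem trigamma_eq_one_div_sq_add (x : ℝ) : trigamma x = 1 / x ^ 2 + trigamma (x + 1) := by
  rw [trigamma, (summable_one_div_add_nat_sq x).tsum_eq_zero_add, trigamma]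
  push_cast
  simp only [add_zero, add_assoc, add_comm (1 : ℝ)]

theorem hasSum_sub_succ_of_antitone {f : ℕ → ℝ} {l : ℝ} (hf : Antitone f)
    (hl : Tendsto f atTop (𝓝 l)) : HasSum (fun k => f k - f (k + 1)) (f 0 - l) := by
  rw [hasSum_iff_tendsto_nat_of_nonneg fun k => sub_nonneg.mpr (hf k.le_succ)]
  simp only [Finset.sum_range_sub']
  exact tendsto_const_nhds.sub hl

theorem trigamma_add_one_lt_one_div {x : ℝ} (hx : 0 < x) : trigamma (x + 1) < 1 / x := by
  have hanti : Antitone fun k : ℕ => 1 / (x + k) := fun m n hmn =>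
    one_div_le_one_div_of_le (by positivity) (by gcongr)
  have hlim : Tendsto (fun k : ℕ => 1 / (x + k)) atTop (𝓝 0) := by
    simp only [one_div]
    exact (tendsto_atTop_add_const_left _ x tendsto_natCast_atTop_atTop).inv_tendsto_atTop
  have htel := hasSum_sub_succ_of_antitone hanti hlim
  simp only [Nat.cast_zero, add_zero, sub_zero, Nat.cast_succ] at htel
  have hterm (k : ℕ) : 1 / (x + 1 + k) ^ 2 < 1 / (x + k) - 1 / (x + (k + 1)) := by
    have hk : 0 < x + k := by positivity
    rw [div_sub_div _ _ hk.ne' (by positivity), div_lt_div_iff₀ (by positivity) (by positivity)]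
    nlinarith
  rw [trigamma, ← htel.tsum_eq]
  exact (summable_one_div_add_nat_sq _).tsum_lt_tsum (fun k => (hterm k).le) (hterm 0)
    htel.summable

theorem mul_trigamma_add_one_lt {x : ℝ} (hx : 0 < x) :
    (x + 1) * trigamma (x + 1) < x * trigamma x := by
  have h := trigamma_add_one_lt_one_div hx
  rw [trigamma_eq_one_div_sq_add x, mul_add, mul_one_div, pow_two,
    div_mul_cancel_left₀ hx.ne', ← one_div]
  linarith

/-- `g ↦ g·ψ'(g)` is strictly decreasing on the positive integers. -/
theorem mul_trigamma_strict_anti (g : ℕ) (hg : 1 ≤ g) :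
    ((g : ℝ) + 1) * trigamma ((g : ℝ) + 1) < (g : ℝ) * trigamma (g : ℝ) :=
  mul_trigamma_add_one_lt (by exact_mod_cast hg)
end

section
/- Let D_n(ω) = ∑_{k=1}^n e^{ikω} and Δ_{ℓ,n}(ω) = (2πn)^{-1}(D_n(ω + π/(ℓn)) − D_n(ω)). There exists a constant C such that for all n, ℓ ≥ 1 and all ω with 0 < ω ≤ ω + π/(ℓn) ≤ π, |Δ_{ℓ,n}(ω)| ≤ C ℓ^{-1}(1 + nω)^{-1}. -/
open Real

/-- The Dirichlet kernel `D_n(ω) = ∑_{k=1}^n e^{ikω}`. -/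
noncomputable def dirichletKernel (n : ℕ) (ω : ℝ) : ℂ :=
  ∑ k ∈ Finset.Icc 1 n, Complex.exp (Complex.I * k * ω)

/-- `Δ_{ℓ,n}(ω) = (2πn)⁻¹ (D_n(ω + π/(ℓn)) − D_n(ω))`. -/
noncomputable def deltaKernel (l n : ℕ) (ω : ℝ) : ℂ :=
  ((2 * π * n : ℝ)⁻¹ : ℂ) * (dirichletKernel n (ω + π / (l * n)) - dirichletKernel n ω)

/-!
With `δ = π/(ℓn)`, `D_n(ω + δ) - D_n(ω) = ∑ₖ e^{ikω} (e^{ikδ} - 1)`. Bounding each term by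
`kδ ≤ nδ` gives `|Δ_{ℓ,n}(ω)| ≲ ℓ⁻¹`. Summation by parts against the geometric sums of `e^{ikω}`,
together with Jordan's inequality `|e^{iω} - 1| ≥ 2ω/π`, gives `|Δ_{ℓ,n}(ω)| ≲ (ℓnω)⁻¹`.
Adding the first to `nω` times the second gives `ℓ⁻¹ (1 + nω)⁻¹`.
-/

open Finset

theorem sub_one_mul_sum_range_pow_mul {R : Type*} [CommRing R] (z : R) (a : ℕ → R) (n : ℕ) :
    (z - 1) * ∑ k ∈ range (n + 1), z ^ k * a k
      = z ^ (n + 1) * a n - a 0 - ∑ k ∈ range n, z ^ (k + 1) * (a (k + 1) - a k) := by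
  induction n with
  | zero => simp [sub_mul]
  | succ n ih =>
    rw [sum_range_succ, mul_add, ih, sum_range_succ]
    ring

theorem norm_sub_one_mul_norm_sum_range_pow_mul_le {𝕜 : Type*} [NormedField 𝕜] {z : 𝕜}
    (hz : ‖z‖ = 1) (a : ℕ → 𝕜) (n : ℕ) :
    ‖z - 1‖ * ‖∑ k ∈ range (n + 1), z ^ k * a k‖
      ≤ ‖a n‖ + ‖a 0‖ + ∑ k ∈ range n, ‖a (k + 1) - a k‖ := by
  rw [← norm_mul, sub_one_mul_sum_range_pow_mul]
  refine (norm_sub_le _ _).trans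
    (add_le_add ((norm_sub_le _ _).trans ?_) ((norm_sum_le _ _).trans ?_)) <;>
    simp [norm_mul, norm_pow, hz]

theorem two_mul_div_pi_le_norm_exp_I_mul_sub_one {x : ℝ} (hx₀ : 0 ≤ x) (hxπ : x ≤ π) :
    2 * x / π ≤ ‖Complex.exp (Complex.I * x) - 1‖ := by
  have hsin : 2 / π * (x / 2) ≤ Real.sin (x / 2) := mul_le_sin (by linarith) (by linarith)
  rw [Complex.norm_exp_I_mul_ofReal_sub_one, norm_mul, Real.norm_of_nonneg zero_le_two,
    Real.norm_eq_abs]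
  calc 2 * x / π = 2 * (2 / π * (x / 2)) := by ring
    _ ≤ 2 * |Real.sin (x / 2)| := by gcongr; exact hsin.trans (le_abs_self _)

theorem norm_exp_I_mul_ofReal_sub_one_le_of_nonneg {x : ℝ} (hx : 0 ≤ x) :
    ‖Complex.exp (Complex.I * x) - 1‖ ≤ x :=
  Real.norm_exp_I_mul_ofReal_sub_one_le.trans_eq (Real.norm_of_nonneg hx)

theorem dirichletKernel_add_sub (n : ℕ) (ω δ : ℝ) :
    dirichletKernel n (ω + δ) - dirichletKernel n ω
      = ∑ k ∈ range (n + 1),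
          Complex.exp (Complex.I * ω) ^ k * (Complex.exp (Complex.I * (k * δ : ℝ)) - 1) := by
  rw [dirichletKernel, dirichletKernel, ← sum_sub_distrib, ← Ico_add_one_right_eq_Icc,
    sum_Ico_eq_sum_range, sum_range_succ']
  simp only [Nat.cast_zero, zero_mul, Complex.ofReal_zero, mul_zero, Complex.exp_zero, sub_self,
    mul_zero, add_zero, add_tsub_cancel_right]
  refine sum_congr rfl fun k _ => ?_
  rw [← Complex.exp_nat_mul, mul_sub, ← Complex.exp_add, mul_one]
  congr 2 <;> push_cast <;> ring

theorem norm_dirichletKernel_add_sub_le (n : ℕ) (ω : ℝ) {δ : ℝ} (hδ : 0 ≤ δ) :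
    ‖dirichletKernel n (ω + δ) - dirichletKernel n ω‖ ≤ (n + 1) * (n * δ) := by
  rw [dirichletKernel_add_sub]
  refine (norm_sum_le _ _).trans ?_
  calc _ ≤ ∑ k ∈ range (n + 1), (n * δ : ℝ) := by
        refine sum_le_sum fun k hk => ?_
        rw [norm_mul, norm_pow, Complex.norm_exp_I_mul_ofReal, one_pow, one_mul]
        refine (norm_exp_I_mul_ofReal_sub_one_le_of_nonneg (by positivity)).trans ?_
        gcongr
        exact_mod_cast Nat.lt_succ_iff.mp (mem_range.mp hk)
    _ = (n + 1) * (n * δ) := by simp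

theorem norm_exp_I_mul_sub_one_mul_norm_dirichletKernel_add_sub_le (n : ℕ) (ω : ℝ) {δ : ℝ}
    (hδ : 0 ≤ δ) :
    ‖Complex.exp (Complex.I * ω) - 1‖ * ‖dirichletKernel n (ω + δ) - dirichletKernel n ω‖
      ≤ 2 * (n * δ) := by
  have hstep (k : ℕ) :
      ‖(Complex.exp (Complex.I * ((k + 1 : ℕ) * δ : ℝ)) - 1)
        - (Complex.exp (Complex.I * (k * δ : ℝ)) - 1)‖ ≤ δ := by
    have : Complex.exp (Complex.I * ((k + 1 : ℕ) * δ : ℝ)) - 1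
        - (Complex.exp (Complex.I * (k * δ : ℝ)) - 1)
        = Complex.exp (Complex.I * (k * δ : ℝ)) * (Complex.exp (Complex.I * δ) - 1) := by
      rw [mul_sub, ← Complex.exp_add]; push_cast; ring_nf
    rw [this, norm_mul, Complex.norm_exp_I_mul_ofReal, one_mul]
    exact norm_exp_I_mul_ofReal_sub_one_le_of_nonneg hδ
  rw [dirichletKernel_add_sub]
  refine (norm_sub_one_mul_norm_sum_range_pow_mul_le (Complex.norm_exp_I_mul_ofReal ω) _ n).trans
    ?_
  have hlast : ‖Complex.exp (Complex.I * (n * δ : ℝ)) - 1‖ ≤ n * δ :=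
    norm_exp_I_mul_ofReal_sub_one_le_of_nonneg (by positivity)
  calc _ ≤ n * δ + 0 + ∑ k ∈ range n, δ :=
        add_le_add (add_le_add hlast (by simp)) (sum_le_sum fun k _ => hstep k)
    _ = 2 * (n * δ) := by rw [sum_const, card_range, nsmul_eq_mul]; ring

theorem mul_norm_dirichletKernel_add_sub_le (n : ℕ) {ω δ : ℝ} (hω₀ : 0 ≤ ω) (hωπ : ω ≤ π)
    (hδ : 0 ≤ δ) :
    ω * ‖dirichletKernel n (ω + δ) - dirichletKernel n ω‖ ≤ π * (n * δ) := by
  have h := (mul_le_mul_of_nonneg_right (two_mul_div_pi_le_norm_exp_I_mul_sub_one hω₀ hωπ)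
    (norm_nonneg _)).trans (norm_exp_I_mul_sub_one_mul_norm_dirichletKernel_add_sub_le n ω hδ)
  rw [div_mul_eq_mul_div, div_le_iff₀ pi_pos] at h
  linarith

theorem norm_deltaKernel (l n : ℕ) (ω : ℝ) :
    ‖deltaKernel l n ω‖
      = ‖dirichletKernel n (ω + π / (l * n)) - dirichletKernel n ω‖ / (2 * π * n) := by
  rw [deltaKernel, norm_mul, norm_inv, Complex.norm_real, Real.norm_of_nonneg (by positivity),
    inv_mul_eq_div]

/-- There exists a constant `C` such that for all `n, ℓ ≥ 1` and all `ω` with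
`0 < ω ≤ ω + π/(ℓn) ≤ π`, `|Δ_{ℓ,n}(ω)| ≤ C ℓ⁻¹ (1 + nω)⁻¹`. -/
theorem deltaKernel_bound :
    ∃ C : ℝ, 0 < C ∧ ∀ n l : ℕ, 1 ≤ n → 1 ≤ l → ∀ ω : ℝ,
      0 < ω → ω + π / (l * n) ≤ π →
      ‖deltaKernel l n ω‖ ≤ C * (l : ℝ)⁻¹ * (1 + n * ω)⁻¹ := by
  refine ⟨π, pi_pos, fun n l hn hl ω hω hωπ => ?_⟩
  have hn' : (1 : ℝ) ≤ n := by exact_mod_cast hn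
  have hl' : (1 : ℝ) ≤ l := by exact_mod_cast hl
  set δ := π / (l * n) with hδ_def
  have hδ : 0 ≤ δ := by positivity
  have hlnδ : l * (n * δ) = π := by rw [hδ_def]; field_simp
  set S := ‖dirichletKernel n (ω + δ) - dirichletKernel n ω‖
  have hsmall : S ≤ (n + 1) * (n * δ) := norm_dirichletKernel_add_sub_le n ω hδ
  have hlarge : ω * S ≤ π * (n * δ) :=
    mul_norm_dirichletKernel_add_sub_le n hω.le (by linarith) hδ
  have hS : (1 + n * ω) * S ≤ 2 * π * n * (n * δ) := by
    have hn_pi : (n : ℝ) + 1 ≤ π * n := by nlinarith [pi_gt_three]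
    calc (1 + n * ω) * S = S + n * (ω * S) := by ring
      _ ≤ (n + 1) * (n * δ) + n * (π * (n * δ)) := by gcongr
      _ ≤ 2 * π * n * (n * δ) := by nlinarith
  calc ‖deltaKernel l n ω‖ = S / (2 * π * n) := norm_deltaKernel l n ω
    _ ≤ π / (l * (1 + n * ω)) := by
      rw [div_le_div_iff₀ (by positivity) (by positivity)]
      calc S * (l * (1 + n * ω)) = l * ((1 + n * ω) * S) := by ring
        _ ≤ l * (2 * π * n * (n * δ)) := by gcongr
        _ = π * (2 * π * n) := by linear_combination (2 * π * n) * hlnδ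
    _ = π * (l : ℝ)⁻¹ * (1 + n * ω)⁻¹ := by rw [div_eq_mul_inv, mul_inv, mul_assoc]
end

section
/- For any ω, ω' ∈ (0, π], |D_n(ω) − D_n(ω')| ≤ C n |log(1 + nω') − log(1 + nω)| for some absolute constant C, where D_n(ω) = ∑_{k=1}^n e^{ikω}. -/
open Real

/-!
Differentiating, `D_n'(t) = i ∑ k e^{ikt}`. The modulus `S` of this sum is trivially at most `n²`,
and, by Abel summation against the geometric sums `∑_{k=j}^n e^{ikt}`, at most
`2n / |e^{it} - 1| ≤ πn / t` (Jordan's inequality). Hence `S (1 + nt) = S + n · St ≤ (1 + π) n²`,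
i.e. `|D_n'(t)|` is at most the derivative of `(1 + π) n log (1 + nt)`, and the mean value
inequality gives the claim with `C = 1 + π`.
-/

open Complex Finset

theorem norm_sub_le_sub_of_norm_deriv_le_deriv {E : Type*} [NormedAddCommGroup E]
    [NormedSpace ℝ E] {f f' : ℝ → E} {g g' : ℝ → ℝ} {a b : ℝ} (hab : a ≤ b)
    (hf : ∀ x ∈ Set.Icc a b, HasDerivAt f (f' x) x)
    (hg : ∀ x ∈ Set.Icc a b, HasDerivAt g (g' x) x)
    (bound : ∀ x ∈ Set.Icc a b, ‖f' x‖ ≤ g' x) :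
    ‖f b - f a‖ ≤ g b - g a := by
  have hf₀ (x) (hx : x ∈ Set.Icc a b) : HasDerivAt (fun y => f y - f a) (f' x) x :=
    (hf x hx).sub_const _
  have hg₀ (x) (hx : x ∈ Set.Icc a b) : HasDerivAt (fun y => g y - g a) (g' x) x :=
    (hg x hx).sub_const _
  refine image_norm_le_of_norm_deriv_right_le_deriv_boundary' (f := fun y => f y - f a)
    (B := fun y => g y - g a)
    (fun x hx => (hf₀ x hx).continuousAt.continuousWithinAt)
    (fun x hx => (hf₀ x (Set.Ico_subset_Icc_self hx)).hasDerivWithinAt) (by simp)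
    (fun x hx => (hg₀ x hx).continuousAt.continuousWithinAt)
    (fun x hx => (hg₀ x (Set.Ico_subset_Icc_self hx)).hasDerivWithinAt)
    (fun x hx => bound x (Set.Ico_subset_Icc_self hx)) (Set.right_mem_Icc.mpr hab)

section GeomSum

variable {R : Type*} [NormedDivisionRing R] {z : R}

theorem norm_geom_sum_Icc_mul_norm_sub_one_le (hz : ‖z‖ ≤ 1) (m n : ℕ) :
    ‖∑ k ∈ Icc m n, z ^ k‖ * ‖z - 1‖ ≤ 2 := by
  rcases le_or_gt m (n + 1) with hmn | hmn
  · rw [← norm_mul, ← Ico_add_one_right_eq_Icc, geom_sum_Ico_mul z hmn]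
    calc ‖z ^ (n + 1) - z ^ m‖ ≤ ‖z ^ (n + 1)‖ + ‖z ^ m‖ := norm_sub_le _ _
      _ ≤ 1 + 1 := by gcongr <;> rw [norm_pow] <;> exact pow_le_one₀ (norm_nonneg z) hz
      _ = 2 := one_add_one_eq_two
  · simp [Icc_eq_empty_of_lt (show n < m by omega)]

theorem norm_sum_natCast_mul_pow_mul_norm_sub_one_le (hz : ‖z‖ ≤ 1) (n : ℕ) :
    ‖∑ k ∈ Icc 1 n, (k : R) * z ^ k‖ * ‖z - 1‖ ≤ 2 * n := by
  have abel : ∑ k ∈ Icc 1 n, (k : R) * z ^ k = ∑ j ∈ Icc 1 n, ∑ k ∈ Icc j n, z ^ k := by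
    have (k : ℕ) : (k : R) * z ^ k = ∑ _j ∈ Icc 1 k, z ^ k := by simp [nsmul_eq_mul]
    simp_rw [this]
    exact sum_comm' fun k j => by simp only [mem_Icc]; omega
  calc ‖∑ k ∈ Icc 1 n, (k : R) * z ^ k‖ * ‖z - 1‖
      ≤ ∑ j ∈ Icc 1 n, ‖∑ k ∈ Icc j n, z ^ k‖ * ‖z - 1‖ := by
        rw [abel, ← sum_mul]; gcongr; exact norm_sum_le _ _
    _ ≤ ∑ _j ∈ Icc 1 n, 2 := sum_le_sum fun j _ => norm_geom_sum_Icc_mul_norm_sub_one_le hz j n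
    _ = 2 * n := by simp [mul_comm]

theorem norm_sum_natCast_mul_pow_le (hz : ‖z‖ ≤ 1) (n : ℕ) :
    ‖∑ k ∈ Icc 1 n, (k : R) * z ^ k‖ ≤ n * n := by
  calc ‖∑ k ∈ Icc 1 n, (k : R) * z ^ k‖ ≤ ∑ k ∈ Icc 1 n, ‖(k : R) * z ^ k‖ := norm_sum_le _ _
    _ ≤ ∑ _k ∈ Icc 1 n, (n : ℝ) := sum_le_sum fun k hk => by
        rw [norm_mul, norm_pow]
        calc ‖(k : R)‖ * ‖z‖ ^ k ≤ k * 1 := by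
              gcongr
              · simpa using Nat.norm_cast_le (α := R) k
              · exact pow_le_one₀ (norm_nonneg z) hz
          _ ≤ n := by rw [mul_one]; exact_mod_cast (mem_Icc.mp hk).2
    _ = n * n := by simp

end GeomSum

theorem two_div_pi_mul_le_norm_exp_I_mul_sub_one {t : ℝ} (ht₀ : 0 ≤ t) (htπ : t ≤ π) :
    2 / π * t ≤ ‖exp (I * t) - 1‖ := by
  have hsin : 2 / π * (t / 2) ≤ Real.sin (t / 2) := Real.mul_le_sin (by linarith) (by linarith)
  rw [norm_exp_I_mul_ofReal_sub_one, Real.norm_eq_abs,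
    abs_of_nonneg (by linarith [mul_nonneg (by positivity : 0 ≤ 2 / π) ht₀])]
  linarith

theorem hasDerivAt_dirichletKernel (n : ℕ) (t : ℝ) :
    HasDerivAt (dirichletKernel n) (I * ∑ k ∈ Icc 1 n, (k : ℂ) * exp (I * t) ^ k) t := by
  have hterm (k : ℕ) :
      HasDerivAt (fun s : ℝ => exp (I * k * s)) (I * (k * exp (I * t) ^ k)) t := by
    rw [← Complex.exp_nat_mul, show (k : ℂ) * (I * t) = I * k * t by ring]
    convert ((hasDerivAt_id' (t : ℂ)).const_mul (I * k)).cexp.comp_ofReal using 1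
    ring
  rw [mul_sum]
  exact HasDerivAt.fun_sum fun k _ => hterm k

theorem norm_sum_natCast_mul_exp_pow_le (n : ℕ) {t : ℝ} (ht₀ : 0 < t) (htπ : t ≤ π) :
    ‖∑ k ∈ Icc 1 n, (k : ℂ) * exp (I * t) ^ k‖ ≤ (1 + π) * n * (n / (1 + n * t)) := by
  set S := ‖∑ k ∈ Icc 1 n, (k : ℂ) * exp (I * t) ^ k‖
  have hz : ‖exp (I * t)‖ ≤ 1 := by rw [norm_exp_I_mul_ofReal]
  have hsq : S ≤ n * n := norm_sum_natCast_mul_pow_le hz n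
  have habel : S * t ≤ π * n := by
    have h := (mul_le_mul_of_nonneg_left (two_div_pi_mul_le_norm_exp_I_mul_sub_one ht₀.le htπ)
      (norm_nonneg _)).trans (norm_sum_natCast_mul_pow_mul_norm_sub_one_le hz n)
    have hπ := Real.pi_pos
    calc S * t = π / 2 * (S * (2 / π * t)) := by field_simp
      _ ≤ π / 2 * (2 * n) := by gcongr
      _ = π * n := by ring
  rw [mul_div_assoc', le_div_iff₀ (by positivity)]
  have hn : (0 : ℝ) ≤ n := n.cast_nonneg
  calc S * (1 + n * t) = S + n * (S * t) := by ring
    _ ≤ n * n + n * (π * n) := by gcongr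
    _ = (1 + π) * n * n := by ring

theorem norm_dirichletKernel_sub_le_of_le (n : ℕ) {ω ω' : ℝ} (hω : 0 < ω) (hle : ω ≤ ω')
    (hπ : ω' ≤ π) :
    ‖dirichletKernel n ω' - dirichletKernel n ω‖
      ≤ (1 + π) * n * (Real.log (1 + n * ω') - Real.log (1 + n * ω)) := by
  rw [mul_sub]
  refine norm_sub_le_sub_of_norm_deriv_le_deriv
    (g := fun s => (1 + π) * n * Real.log (1 + n * s))
    (g' := fun s => (1 + π) * n * (n / (1 + n * s))) hle
    (fun t _ => hasDerivAt_dirichletKernel n t)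
    (fun t ht => ?_) (fun t ht => ?_)
  · have hpos : 0 < 1 + n * t := by have := hω.trans_le ht.1; positivity
    simpa [div_eq_mul_inv] using
      ((((hasDerivAt_id t).const_mul (n : ℝ)).const_add 1).log hpos.ne').const_mul ((1 + π) * n)
  · rw [norm_mul, norm_I, one_mul]
    exact norm_sum_natCast_mul_exp_pow_le n (hω.trans_le ht.1) (ht.2.trans hπ)

/-- For any `ω, ω' ∈ (0, π]`, `|D_n(ω) − D_n(ω')| ≤ C n |log(1 + nω') − log(1 + nω)|`
for some absolute constant `C`. -/
theorem dirichletKernel_modulus_of_continuity :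
    ∃ C : ℝ, 0 < C ∧ ∀ n : ℕ, ∀ ω ω' : ℝ,
      0 < ω → ω ≤ π → 0 < ω' → ω' ≤ π →
      ‖dirichletKernel n ω - dirichletKernel n ω'‖
        ≤ C * n * |Real.log (1 + n * ω') - Real.log (1 + n * ω)| := by
  refine ⟨1 + π, by positivity, fun n ω ω' hω hωπ hω' hω'π => ?_⟩
  wlog hle : ω ≤ ω' generalizing ω ω'
  · rw [norm_sub_rev, abs_sub_comm]
    exact this ω' ω hω' hω'π hω hωπ (le_of_not_ge hle)
  have hlog : Real.log (1 + n * ω) ≤ Real.log (1 + n * ω') := by gcongr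
  rw [norm_sub_rev, abs_of_nonneg (sub_nonneg.mpr hlog)]
  exact norm_dirichletKernel_sub_le_of_le n hω hle hω'π
end

section
/- Let μ ≥ 1, ν ∈ (0,1], δ₋, δ₊ ∈ [0, 1/2), d ∈ [−δ₋, δ₊], and let f_* : [−π,π] → ℝ₊ satisfy |f_*(ω) − f_*(ω')| ≤ μ f_*(0) |ω − ω'| / min(|ω|,|ω'|) for all nonzero ω, ω', and max f_* ≤ μ f_*(0). Then there is a constant C depending only on δ₋, δ₊, μ such that for all ω, ω' ∈ [−π,π]∖{0}: | |ω|^{−2d} f_*(ω) − |ω'|^{−2d} f_*(ω') | ≤ C f_*(0) (min(|ω|,|ω'|))^{−1−2d} |ω − ω'|. -/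
open Real

lemma aux_rpow_lip (a t : ℝ) (ha : |a| ≤ 1) (ht : 1 ≤ t) : |t ^ a - 1| ≤ t - 1 := by
  obtain ⟨ha1, ha2⟩ := abs_le.mp ha
  rcases le_or_gt 0 a with h | h
  · have h1 : (1:ℝ) ≤ t ^ a := Real.one_le_rpow ht h
    have h2 : t ^ a ≤ t := by
      calc t ^ a ≤ t ^ (1:ℝ) := Real.rpow_le_rpow_of_exponent_le ht ha2
        _ = t := Real.rpow_one t
    rw [abs_of_nonneg (by linarith)]; linarith
  · have h1 : t ^ a ≤ 1 := Real.rpow_le_one_of_one_le_of_nonpos ht h.le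
    rw [abs_of_nonpos (by linarith)]
    rcases le_or_gt 2 t with h2 | h2
    · have h3 : 0 < t ^ a := Real.rpow_pos_of_pos (by linarith) a
      linarith
    · have h3 : t ^ (-1:ℝ) ≤ t ^ a := Real.rpow_le_rpow_of_exponent_le ht ha1
      have ht0 : 0 < t := by linarith
      have h4 : t ^ (-1:ℝ) = 1 / t := by
        rw [Real.rpow_neg_one]; exact (one_div t).symm
      have h5 : 2 - t ≤ 1 / t := by
        rw [le_div_iff₀ ht0]; nlinarith [sq_nonneg (t - 1)]
      linarith [h3, h4 ▸ h3]

lemma key_step (μ : ℝ) (hμ : 1 ≤ μ) (d : ℝ) (hd : |(-2*d)| ≤ 1)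
    (fs : ℝ → ℝ) (f0 : 0 ≤ fs 0)
    (ω ω' : ℝ)
    (h1 : 0 ≤ fs ω) (h2 : fs ω ≤ μ * fs 0)
    (hlip : |fs ω - fs ω'| ≤ μ * fs 0 * |ω - ω'| / min |ω| |ω'|)
    (hne : ω ≠ 0) (hne' : ω' ≠ 0) (hle : |ω'| ≤ |ω|) :
    abs (|ω| ^ (-2*d) * fs ω - |ω'| ^ (-2*d) * fs ω')
      ≤ 2*μ * fs 0 * (min |ω| |ω'|) ^ (-1-2*d) * |ω - ω'| := by
  set a : ℝ := -2*d with ha_def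
  set m : ℝ := |ω'| with hm_def
  set M : ℝ := |ω| with hM_def
  have hmin : min M m = m := min_eq_right hle
  have hm : 0 < m := abs_pos.mpr hne'
  have hM : 0 < M := abs_pos.mpr hne
  have hma : 0 < m ^ a := Real.rpow_pos_of_pos hm a
  have hexp : (-1 - 2*d : ℝ) = a - 1 := by rw [ha_def]; ring
  have hm1 : m ^ (a - 1) = m ^ a / m := Real.rpow_sub_one hm.ne' a
  have hm1pos : 0 < m ^ (a - 1) := Real.rpow_pos_of_pos hm _
  -- bound on |M^a - m^a|
  have hdiv : (M/m) ^ a = M ^ a / m ^ a := Real.div_rpow (abs_nonneg ω) (abs_nonneg ω') a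
  have ht : 1 ≤ M/m := (one_le_div hm).mpr hle
  have haux : |(M/m) ^ a - 1| ≤ M/m - 1 := aux_rpow_lip a (M/m) hd ht
  have h5 : |M ^ a - m ^ a| = m ^ a * |M ^ a / m ^ a - 1| := by
    rw [← abs_of_pos hma, ← abs_mul, abs_of_pos hma]
    congr 1
    field_simp
  have hsub : M - m ≤ |ω - ω'| := by
    have := abs_sub_abs_le_abs_sub ω ω'
    simpa [hM_def, hm_def] using this
  have habs : |M ^ a - m ^ a| ≤ m ^ (a-1) * |ω - ω'| := by
    rw [h5]
    calc m ^ a * |M ^ a / m ^ a - 1| ≤ m ^ a * (M/m - 1) := by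
          apply mul_le_mul_of_nonneg_left _ hma.le
          rw [← hdiv]; exact haux
      _ = m ^ (a-1) * (M - m) := by rw [hm1]; field_simp
      _ ≤ m ^ (a-1) * |ω - ω'| := mul_le_mul_of_nonneg_left hsub hm1pos.le
  have hlip' : |fs ω - fs ω'| ≤ μ * fs 0 * |ω - ω'| / m := by
    have : min |ω| |ω'| = m := hmin
    rwa [this] at hlip
  have hmf : 0 ≤ μ * fs 0 := mul_nonneg (by linarith) f0
  have main : |M ^ a * fs ω - m ^ a * fs ω'|
      ≤ 2*μ * fs 0 * m ^ (a-1) * |ω - ω'| := by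
    have hdecomp : M ^ a * fs ω - m ^ a * fs ω'
        = (M ^ a - m ^ a) * fs ω + m ^ a * (fs ω - fs ω') := by ring
    calc |M ^ a * fs ω - m ^ a * fs ω'|
        = |(M ^ a - m ^ a) * fs ω + m ^ a * (fs ω - fs ω')| := by rw [hdecomp]
      _ ≤ |(M ^ a - m ^ a) * fs ω| + |m ^ a * (fs ω - fs ω')| := abs_add_le _ _
      _ = |M ^ a - m ^ a| * fs ω + m ^ a * |fs ω - fs ω'| := by
          rw [abs_mul, abs_mul, abs_of_nonneg h1, abs_of_pos hma]
      _ ≤ (m ^ (a-1) * |ω - ω'|) * (μ * fs 0) + m ^ a * (μ * fs 0 * |ω - ω'| / m) := by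
          gcongr
      _ = 2*μ * fs 0 * m ^ (a-1) * |ω - ω'| := by
          rw [hm1]; field_simp; ring
  rw [hmin, hexp]
  exact main

/-- Inequality (eq:bound-difference-functions): if `f_*` satisfies the Lipschitz-type
conditions of the class `L(μ,ν)`, then `|ω|^{−2d} f_*(ω)` satisfies the stated local
Lipschitz bound, with a constant depending only on `δ₋, δ₊, μ`. -/
theorem bound_difference_functions
    (μ : ℝ) (hμ : 1 ≤ μ) (ν : ℝ) (hν : ν ∈ Set.Ioc (0 : ℝ) 1)
    (δm δp : ℝ) (hδm : δm ∈ Set.Ico (0 : ℝ) (1 / 2)) (hδp : δp ∈ Set.Ico (0 : ℝ) (1 / 2)) :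
    ∃ C : ℝ, 0 < C ∧ ∀ d ∈ Set.Icc (-δm) δp, ∀ fs : ℝ → ℝ,
      (∀ ω ∈ Set.Icc (-π) π, 0 ≤ fs ω) →
      (∀ ω ∈ Set.Icc (-π) π, fs ω ≤ μ * fs 0) →
      (∀ ω ∈ Set.Icc (-π) π, ∀ ω' ∈ Set.Icc (-π) π, ω ≠ 0 → ω' ≠ 0 →
        |fs ω - fs ω'| ≤ μ * fs 0 * |ω - ω'| / min |ω| |ω'|) →
      ∀ ω ∈ Set.Icc (-π) π, ∀ ω' ∈ Set.Icc (-π) π, ω ≠ 0 → ω' ≠ 0 →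
        abs (|ω| ^ (-2 * d) * fs ω - |ω'| ^ (-2 * d) * fs ω')
          ≤ C * fs 0 * (min |ω| |ω'|) ^ (-1 - 2 * d) * |ω - ω'| := by
  refine ⟨2 * μ, by linarith, ?_⟩
  intro d hd fs hnn hub hL ω hω ω' hω' hne hne'
  have hd' : |(-2*d)| ≤ 1 := by
    rw [abs_le]
    constructor
    · have := hd.2; have := hδp.2; linarith
    · have := hd.1; have := hδm.2; linarith
  have h0mem : (0:ℝ) ∈ Set.Icc (-π) π := ⟨by linarith [Real.pi_pos], Real.pi_pos.le⟩
  have f0 : 0 ≤ fs 0 := hnn 0 h0mem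
  rcases le_total |ω'| |ω| with hle | hle
  · exact key_step μ hμ d hd' fs f0 ω ω' (hnn ω hω) (hub ω hω)
      (hL ω hω ω' hω' hne hne') hne hne' hle
  · have h := key_step μ hμ d hd' fs f0 ω' ω (hnn ω' hω') (hub ω' hω')
      (hL ω' hω' ω hω hne' hne) hne' hne hle
    rw [abs_sub_comm] at h
    rw [min_comm, abs_sub_comm ω ω']
    convert h using 2
end
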